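/- For any family {Θ_i}_{i∈I} of sets of partial functions from X to V, the lub closure of the union ∪{Θ_i | i ∈ I} equals the family lub of the closures: overline(∪{Θ_i | i ∈ I}) = ⊔{Θ̄_i | i ∈ I}. -/

import Mathlib

/-
Both sides are the smallest lub closed set containing every `Θ i`.
The family lub of lub closed sets is lub closed: the lub of a bounded set `S` of family lubs
is the family lub of the componentwise lubs, since a lub of lubs is the lub of everything
below them. It contains each `Θ i`, padding with `⊥` (the lub of `∅`, hence in every lub
closed set) in the other components. Conversely, a family lub of elements of a lub closed
set lies in that set.
-/

/- Partial functions X ⇀ V are modeled as functions `X → Option V`. -/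

variable {X V E : Type*}

/-- `θ` is less informative than `θ'` (θ ⊑ θ'): wherever `θ` is defined, `θ'` is
defined with the same value. -/
def PFle (θ θ' : X → Option V) : Prop :=
  ∀ x v, θ x = some v → θ' x = some v

/-- The everywhere-undefined partial function ⊥. -/
def pbot : X → Option V := fun _ => none

/-- `θ'` is an upper bound of the set `Θ` of partial functions. -/
def IsUB (Θ : Set (X → Option V)) (θ' : X → Option V) : Prop :=
  ∀ θ ∈ Θ, PFle θ θ'

/-- `θ'` is the least upper bound (⊔Θ) of the set `Θ` of partial functions. -/
def IsLubPF (Θ : Set (X → Option V)) (θ' : X → Option V) : Prop :=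
  IsUB Θ θ' ∧ ∀ θ'', IsUB Θ θ'' → PFle θ' θ''

/-- Θ is lub closed: every subset of Θ admitting an upper bound has its lub in Θ. -/
def LubClosed (Θ : Set (X → Option V)) : Prop :=
  ∀ Θ' ⊆ Θ, ∀ u, IsLubPF Θ' u → u ∈ Θ

/-- The lub closure of Θ: the intersection of all lub closed sets including Θ. -/
def lubClosure (Θ : Set (X → Option V)) : Set (X → Option V) :=
  ⋂₀ {Θ' | Θ ⊆ Θ' ∧ LubClosed Θ'}

/-- The family lub ⊔{Θ_i | i ∈ I}. -/
def famLub {I : Type*} (Θ : I → Set (X → Option V)) : Set (X → Option V) :=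
  {θ | ∃ f : I → (X → Option V), (∀ i, f i ∈ Θ i) ∧ IsLubPF (Set.range f) θ}

lemma PFle_refl (θ : X → Option V) : PFle θ θ := fun _ _ h => h

lemma PFle_trans {θ₁ θ₂ θ₃ : X → Option V} (h₁₂ : PFle θ₁ θ₂) (h₂₃ : PFle θ₂ θ₃) :
    PFle θ₁ θ₃ :=
  fun x v h => h₂₃ x v (h₁₂ x v h)

lemma pbot_PFle (θ : X → Option V) : PFle pbot θ := fun _ _ h => nomatch h

lemma isLubPF_empty : IsLubPF (∅ : Set (X → Option V)) pbot :=
  ⟨fun _ h => h.elim, fun θ _ => pbot_PFle θ⟩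

lemma isLubPF_of_mem {Θ : Set (X → Option V)} {θ : X → Option V} (hθ : θ ∈ Θ)
    (hub : IsUB Θ θ) : IsLubPF Θ θ :=
  ⟨hub, fun _ h => h θ hθ⟩

/-- A bounded set has a lub: it agrees with any upper bound where some member is defined. -/
lemma exists_isLubPF_of_isUB {Θ : Set (X → Option V)} {b : X → Option V} (hb : IsUB Θ b) :
    ∃ u, IsLubPF Θ u := by
  classical
  refine ⟨fun x => if ∃ θ ∈ Θ, (θ x).isSome then b x else none, ?_, ?_⟩
  · intro θ hθ x v hx
    change ite _ _ _ = _
    rw [if_pos ⟨θ, hθ, by simp [hx]⟩]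
    exact hb θ hθ x v hx
  · intro w hw x v hx
    change ite _ _ _ = _ at hx
    split_ifs at hx with hdef
    · obtain ⟨θ, hθ, hsome⟩ := hdef
      obtain ⟨v', hv'⟩ := Option.isSome_iff_exists.mp hsome
      rw [hb θ hθ x v' hv', Option.some_inj] at hx
      exact hx ▸ hw θ hθ x v' hv'

lemma LubClosed.pbot_mem {Θ : Set (X → Option V)} (h : LubClosed Θ) : pbot ∈ Θ :=
  h ∅ (Set.empty_subset _) pbot isLubPF_empty

lemma subset_lubClosure (Θ : Set (X → Option V)) : Θ ⊆ lubClosure Θ :=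
  fun _ hθ _ hS => hS.1 hθ

lemma lubClosed_lubClosure (Θ : Set (X → Option V)) : LubClosed (lubClosure Θ) :=
  fun Θ' hΘ' u hu _ hS => hS.2 Θ' (fun _ hθ => hΘ' hθ _ hS) u hu

lemma lubClosure_subset {Θ S : Set (X → Option V)} (hΘS : Θ ⊆ S) (hS : LubClosed S) :
    lubClosure Θ ⊆ S :=
  fun _ hθ => hθ S ⟨hΘS, hS⟩

lemma lubClosure_mono {Θ Θ' : Set (X → Option V)} (h : Θ ⊆ Θ') :
    lubClosure Θ ⊆ lubClosure Θ' :=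
  lubClosure_subset (h.trans (subset_lubClosure Θ')) (lubClosed_lubClosure Θ')

section famLub

variable {I : Type*} {Θ : I → Set (X → Option V)}

lemma subset_famLub (hbot : ∀ i, pbot ∈ Θ i) (j : I) : Θ j ⊆ famLub Θ := by
  classical
  intro θ hθ
  refine ⟨fun i => if i = j then θ else pbot, fun i => ?_, isLubPF_of_mem ⟨j, if_pos rfl⟩ ?_⟩
  · dsimp only
    split_ifs with h
    · exact h ▸ hθ
    · exact hbot i
  · rintro _ ⟨i, rfl⟩
    dsimp only
    split_ifs
    exacts [PFle_refl θ, pbot_PFle θ]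

lemma famLub_subset {S : Set (X → Option V)} (hS : LubClosed S) (hΘS : ∀ i, Θ i ⊆ S) :
    famLub Θ ⊆ S := by
  rintro θ ⟨f, hf, hθ⟩
  exact hS _ (Set.range_subset_iff.mpr fun i => hΘS i (hf i)) θ hθ

lemma LubClosed.famLub (hΘ : ∀ i, LubClosed (Θ i)) : LubClosed (famLub Θ) := by
  intro S hS u hu
  choose F hF hFlub using fun θ (h : θ ∈ S) => hS h
  let T : I → Set (X → Option V) := fun i => Set.range fun θ : S => F θ θ.2 i
  have hTu : ∀ i, IsUB (T i) u := by
    rintro i _ ⟨θ, rfl⟩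
    exact PFle_trans ((hFlub θ θ.2).1 _ ⟨i, rfl⟩) (hu.1 θ θ.2)
  choose g hg using fun i => exists_isLubPF_of_isUB (hTu i)
  refine ⟨g, fun i => hΘ i (T i) ?_ (g i) (hg i), ?_, fun w hw => hu.2 w ?_⟩
  · rintro _ ⟨θ, rfl⟩
    exact hF θ θ.2 i
  · rintro _ ⟨i, rfl⟩
    exact (hg i).2 u (hTu i)
  · intro θ hθ
    refine (hFlub θ hθ).2 w ?_
    rintro _ ⟨i, rfl⟩
    exact PFle_trans ((hg i).1 _ ⟨⟨θ, hθ⟩, rfl⟩) (hw _ ⟨i, rfl⟩)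

end famLub

/-- The lub closure of a union equals the family lub of the closures. -/
theorem stmt12 {I : Type*} (Θ : I → Set (X → Option V)) :
    lubClosure (⋃ i, Θ i) = famLub (fun i => lubClosure (Θ i)) := by
  have hclosed : ∀ i, LubClosed (lubClosure (Θ i)) := fun i => lubClosed_lubClosure (Θ i)
  apply Set.Subset.antisymm
  · refine lubClosure_subset (Set.iUnion_subset fun i => ?_) (LubClosed.famLub hclosed)
    exact (subset_lubClosure (Θ i)).trans
      (subset_famLub (fun j => (hclosed j).pbot_mem) i)
  · exact famLub_subset (lubClosed_lubClosure _)
      fun i => lubClosure_mono (Set.subset_iUnion Θ i)
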